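/- arXiv:1601.06632 — 2 statements merged into one kernel-verified Lean document; each statement's English description precedes it below -/
import Mathlib

section
/- Let N ≥ 1 and let u : ℝ^N → ℝ be a C², ℤ^N-periodic admissible function. Then for every x ∈ ℝ^N one has ‖∇u(x)‖² ≤ e^{2·osc(u)} − 1, where osc(u) = sup u − inf u. -/
/-!
At a maximum point `x₀` of the periodic function `e^{-2u} (1 + |∇u|²)`, which exists by
compactness of the torus, the first-order condition reads `Hess u ∇u = (1 + |∇u|²) ∇u`, that is
`A[u] ∇u = 0`; positive definiteness of `A[u](x₀)` forces `∇u(x₀) = 0`. Hence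
`e^{-2u(x)} (1 + |∇u(x)|²) ≤ e^{-2u(x₀)}`, so `1 + |∇u(x)|² ≤ e^{2(u(x) - u(x₀))} ≤ e^{2 osc u}`.
-/

open Matrix Real

/-- The `i`-th partial derivative (gradient component) of `u` at `x`. -/
noncomputable def grad {N : ℕ} (u : (Fin N → ℝ) → ℝ) (x : Fin N → ℝ) (i : Fin N) : ℝ :=
  fderiv ℝ u x (Pi.single i 1)

/-- The `(i,j)` entry of the Hessian matrix of `u` at `x`. -/
noncomputable def hess {N : ℕ} (u : (Fin N → ℝ) → ℝ) (x : Fin N → ℝ) (i j : Fin N) : ℝ :=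
  fderiv ℝ (fun y => fderiv ℝ u y (Pi.single j 1)) x (Pi.single i 1)

/-- The squared norm of the gradient of `u` at `x`. -/
noncomputable def gradSq {N : ℕ} (u : (Fin N → ℝ) → ℝ) (x : Fin N → ℝ) : ℝ :=
  ∑ i, (grad u x i) ^ 2

/-- The Laplacian of `u` at `x` (trace of the Hessian). -/
noncomputable def lap {N : ℕ} (u : (Fin N → ℝ) → ℝ) (x : Fin N → ℝ) : ℝ :=
  ∑ i, hess u x i i

/-- The matrix `A[u](x) = I + ∇u(x) (∇u(x))ᵀ − Hess u(x)`. -/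
noncomputable def amat {N : ℕ} (u : (Fin N → ℝ) → ℝ) (x : Fin N → ℝ) :
    Matrix (Fin N) (Fin N) ℝ :=
  1 + Matrix.of (fun i j => grad u x i * grad u x j) - Matrix.of (fun i j => hess u x i j)

/-- `u` is `ℤ^N`-periodic. -/
def ZPeriodic {N : ℕ} (u : (Fin N → ℝ) → ℝ) : Prop :=
  ∀ (x : Fin N → ℝ) (k : Fin N → ℤ), u (x + fun i => (k i : ℝ)) = u x

/-- `u` is admissible: `A[u](x)` is positive definite for every `x`. -/
def Admissible {N : ℕ} (u : (Fin N → ℝ) → ℝ) : Prop :=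
  ∀ x, (amat u x).PosDef

noncomputable def gradEnergy {N : ℕ} (u : (Fin N → ℝ) → ℝ) (x : Fin N → ℝ) : ℝ :=
  exp (-2 * u x) * (1 + gradSq u x)

section GradientEstimate

variable {N : ℕ} {u : (Fin N → ℝ) → ℝ}

lemma exists_mem_Icc_eq_add_intCast (y : Fin N → ℝ) :
    ∃ z ∈ Set.Icc (0 : Fin N → ℝ) 1, ∃ k : Fin N → ℤ, y = z + fun i => (k i : ℝ) :=
  ⟨fun i => Int.fract (y i), ⟨fun _ => Int.fract_nonneg _, fun _ => (Int.fract_lt_one _).le⟩,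
    fun i => ⌊y i⌋, funext fun i => (Int.fract_add_floor (y i)).symm⟩

lemma ZPeriodic.range_subset_image_Icc (hper : ZPeriodic u) :
    Set.range u ⊆ u '' Set.Icc 0 1 := by
  rintro _ ⟨y, rfl⟩
  obtain ⟨z, hz, k, rfl⟩ := exists_mem_Icc_eq_add_intCast y
  exact ⟨z, hz, (hper z k).symm⟩

lemma ZPeriodic.bddAbove_range (hper : ZPeriodic u) (hc : Continuous u) :
    BddAbove (Set.range u) :=
  ((isCompact_Icc.image hc).bddAbove).mono hper.range_subset_image_Icc

lemma ZPeriodic.bddBelow_range (hper : ZPeriodic u) (hc : Continuous u) :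
    BddBelow (Set.range u) :=
  ((isCompact_Icc.image hc).bddBelow).mono hper.range_subset_image_Icc

lemma ZPeriodic.exists_forall_le (hper : ZPeriodic u) (hc : Continuous u) :
    ∃ x₀, ∀ y, u y ≤ u x₀ := by
  obtain ⟨x₀, -, hmax⟩ :=
    isCompact_Icc.exists_isMaxOn (Set.nonempty_Icc.2 zero_le_one) hc.continuousOn
  refine ⟨x₀, fun y => ?_⟩
  obtain ⟨z, hz, k, rfl⟩ := exists_mem_Icc_eq_add_intCast y
  rw [hper z k]
  exact hmax hz

lemma ZPeriodic.grad_add_intCast (hper : ZPeriodic u) (x : Fin N → ℝ) (k : Fin N → ℤ) :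
    grad u (x + fun i => (k i : ℝ)) = grad u x := by
  have hshift : (fun y => u (y + fun i => (k i : ℝ))) = u := funext fun y => hper y k
  funext i
  rw [grad, ← fderiv_comp_add_right, hshift, grad]

lemma ZPeriodic.gradEnergy (hper : ZPeriodic u) : ZPeriodic (gradEnergy u) := by
  intro x k
  simp only [_root_.gradEnergy, gradSq, hper x k, hper.grad_add_intCast x k]

lemma contDiff_grad (hu : ContDiff ℝ 2 u) (j : Fin N) : ContDiff ℝ 1 (fun y => grad u y j) :=
  (hu.fderiv_right (by norm_num)).clm_apply contDiff_const

lemma continuous_gradEnergy (hu : ContDiff ℝ 2 u) : Continuous (gradEnergy u) :=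
  (continuous_exp.comp (continuous_const.mul hu.continuous)).mul
    (continuous_const.add
      (continuous_finsetSum _ fun j _ => (contDiff_grad hu j).continuous.pow 2))

lemma hasFDerivAt_gradSq (hu : ContDiff ℝ 2 u) (x : Fin N → ℝ) :
    HasFDerivAt (gradSq u) (∑ j, (2 * grad u x j) • fderiv ℝ (fun y => grad u y j) x) x := by
  have hsq : ∀ j, HasFDerivAt (fun y => grad u y j ^ 2)
      ((2 * grad u x j) • fderiv ℝ (fun y => grad u y j) x) x := fun j => by
    simpa using (((contDiff_grad hu j).differentiable (by norm_num) x).hasFDerivAt.pow 2)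
  exact HasFDerivAt.fun_sum fun j _ => hsq j

lemma fderiv_gradEnergy_single (hu : ContDiff ℝ 2 u) (x : Fin N → ℝ) (i : Fin N) :
    fderiv ℝ (gradEnergy u) x (Pi.single i 1) =
      2 * exp (-2 * u x) * ((Matrix.of (fun i j => hess u x i j) *ᵥ grad u x) i -
        (1 + gradSq u x) * grad u x i) := by
  have hexp : HasFDerivAt (fun y => exp (-2 * u y))
      (exp (-2 * u x) • ((-2 : ℝ) • fderiv ℝ u x)) x :=
    (((hu.differentiable (by norm_num)) x).hasFDerivAt.const_mul (-2)).exp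
  have henergy : HasFDerivAt (gradEnergy u) _ x :=
    hexp.mul ((hasFDerivAt_gradSq hu x).const_add 1)
  rw [henergy.fderiv]
  simp only [_root_.add_apply, _root_.smul_apply, FunLike.coe_sum, Finset.sum_apply,
    smul_eq_mul, mulVec, dotProduct, of_apply]
  have hhess : ∀ j, fderiv ℝ (fun y => grad u y j) x (Pi.single i 1) = hess u x i j :=
    fun j => rfl
  have hsum : ∑ j, 2 * grad u x j * hess u x i j = 2 * ∑ j, hess u x i j * grad u x j := by
    rw [Finset.mul_sum]
    exact Finset.sum_congr rfl fun j _ => by ring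
  rw [← grad]
  simp only [hhess, hsum]
  ring

lemma hess_mulVec_grad_of_isLocalMax {x₀ : Fin N → ℝ}
    (hu : ContDiff ℝ 2 u) (hmax : IsLocalMax (gradEnergy u) x₀) :
    Matrix.of (fun i j => hess u x₀ i j) *ᵥ grad u x₀ =
      (1 + gradSq u x₀) • grad u x₀ := by
  funext i
  have hcrit := congrArg (fun L => L (Pi.single i 1)) hmax.fderiv_eq_zero
  simp only [fderiv_gradEnergy_single hu, _root_.zero_apply] at hcrit
  simpa [sub_eq_zero] using (mul_eq_zero.1 hcrit).resolve_left (by positivity)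

lemma amat_mulVec_grad (x : Fin N → ℝ) :
    amat u x *ᵥ grad u x =
      (1 + gradSq u x) • grad u x - Matrix.of (fun i j => hess u x i j) *ᵥ grad u x := by
  have hrank_one :
      Matrix.of (fun i j => grad u x i * grad u x j) = vecMulVec (grad u x) (grad u x) := rfl
  have hgradSq : grad u x ⬝ᵥ grad u x = gradSq u x := by
    simp only [dotProduct, gradSq, sq]
  rw [amat, sub_mulVec, add_mulVec, one_mulVec, hrank_one, vecMulVec_mulVec, op_smul_eq_smul,
    hgradSq, add_smul, one_smul]

lemma grad_eq_zero_of_isLocalMax {x₀ : Fin N → ℝ}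
    (hu : ContDiff ℝ 2 u) (hpos : (amat u x₀).PosDef) (hmax : IsLocalMax (gradEnergy u) x₀) :
    grad u x₀ = 0 := by
  by_contra hne
  have hquad := hpos.dotProduct_mulVec_pos hne
  rw [amat_mulVec_grad, hess_mulVec_grad_of_isLocalMax hu hmax, sub_self, dotProduct_zero] at hquad
  exact lt_irrefl _ hquad

lemma one_add_gradSq_eq (x : Fin N → ℝ) :
    1 + gradSq u x = exp (2 * u x) * gradEnergy u x := by
  rw [gradEnergy, ← mul_assoc, ← exp_add]
  simp

end GradientEstimate

theorem stmt0_general {N : ℕ} (u : (Fin N → ℝ) → ℝ)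
    (hu : ContDiff ℝ 2 u) (hper : ZPeriodic u) (hadm : Admissible u) :
    ∀ x : Fin N → ℝ,
      gradSq u x ≤ Real.exp (2 * (sSup (Set.range u) - sInf (Set.range u))) - 1 := by
  intro x
  obtain ⟨x₀, hmax⟩ := hper.gradEnergy.exists_forall_le (continuous_gradEnergy hu)
  have hcrit : gradSq u x₀ = 0 := by
    simp [gradSq, grad_eq_zero_of_isLocalMax hu (hadm x₀) (.of_forall hmax)]
  have hux : u x ≤ sSup (Set.range u) := le_csSup (hper.bddAbove_range hu.continuous) ⟨x, rfl⟩
  have hux₀ : sInf (Set.range u) ≤ u x₀ :=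
    csInf_le (hper.bddBelow_range hu.continuous) ⟨x₀, rfl⟩
  have hbound : 1 + gradSq u x ≤ exp (2 * (u x - u x₀)) := calc
    1 + gradSq u x = exp (2 * u x) * gradEnergy u x := one_add_gradSq_eq x
    _ ≤ exp (2 * u x) * gradEnergy u x₀ := by gcongr; exact hmax x
    _ = exp (2 * (u x - u x₀)) := by
      rw [gradEnergy, hcrit, add_zero, mul_one, ← exp_add]
      ring_nf
  have hosc : exp (2 * (u x - u x₀)) ≤ exp (2 * (sSup (Set.range u) - sInf (Set.range u))) :=
    exp_le_exp.2 (by linarith)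
  linarith

/-- Gradient estimate for admissible periodic functions:
`‖∇u(x)‖² ≤ e^{2 osc(u)} − 1` where `osc(u) = sup u − inf u`. -/
theorem stmt0 {N : ℕ} (hN : 1 ≤ N) (u : (Fin N → ℝ) → ℝ)
    (hu : ContDiff ℝ 2 u) (hper : ZPeriodic u) (hadm : Admissible u) :
    ∀ x : Fin N → ℝ,
      gradSq u x ≤ Real.exp (2 * (sSup (Set.range u) - sInf (Set.range u))) - 1 :=
  stmt0_general u hu hper hadm
end

section
/- Let N ≥ 1, let p ≥ 0 and λ > 0 be real numbers, and let f : ℝ^N → ℝ be a continuous, ℤ^N-periodic, everywhere strictly positive function. Let u : ℝ^N → ℝ be a C², ℤ^N-periodic function satisfying det A[u](x) = e^{−λu(x)} · f(x) · (1 + ‖∇u(x)‖²)^p for all x. Then ‖u‖_∞ ≤ λ^{−1} · ‖log f‖_∞. -/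
open Matrix Real

/-! At a maximum point `x₀` of `u` the gradient vanishes and `Hess u ≤ 0`, so `A[u](x₀) ≥ I`,
hence `det A[u](x₀) ≥ 1`, i.e. `λ u(x₀) ≤ log f(x₀)`. At a minimum point `x₁`, `Hess u ≥ 0` gives
`A[u](x₁) ≤ I`; this bounds `det A[u](x₁)` by `1` only once `A[u](x₁)` is known to be positive
definite. That holds everywhere: `A[u]` is positive definite at `x₀`, its determinant never vanishes
by the equation, and a continuous family of symmetric matrices with nonzero determinant cannot leave
the positive definite cone on the connected space `ℝ^N`. So `log f(x₁) ≤ λ u(x₁)`. Periodicity makes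
`u` attain its extrema and `log f` bounded. -/

open Filter Topology

theorem IsLocalMax.deriv_deriv_nonpos {f : ℝ → ℝ} {x₀ : ℝ} (h : IsLocalMax f x₀)
    (hc : ContinuousAt f x₀) : deriv (deriv f) x₀ ≤ 0 := by
  by_contra! hpos
  have hconst : f =ᶠ[𝓝 x₀] fun _ => f x₀ :=
    (h.and (isLocalMin_of_deriv_deriv_pos hpos h.deriv_eq_zero hc)).mono
      fun _ hx => le_antisymm hx.1 hx.2
  exact hpos.ne' (by simpa using hconst.deriv.deriv_eq)

theorem IsLocalMin.deriv_deriv_nonneg {f : ℝ → ℝ} {x₀ : ℝ} (h : IsLocalMin f x₀)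
    (hc : ContinuousAt f x₀) : 0 ≤ deriv (deriv f) x₀ := by
  by_contra! hneg
  have hconst : f =ᶠ[𝓝 x₀] fun _ => f x₀ :=
    (h.and (isLocalMax_of_deriv_deriv_neg hneg h.deriv_eq_zero hc)).mono
      fun _ hx => le_antisymm hx.2 hx.1
  exact hneg.ne (by simpa using hconst.deriv.deriv_eq)

section SecondDerivative

variable {E : Type*} [NormedAddCommGroup E] [NormedSpace ℝ E] {u : E → ℝ}

theorem ContDiff.differentiable_fderiv_of_two (hu : ContDiff ℝ 2 u) :
    Differentiable ℝ (fderiv ℝ u) :=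
  (hu.fderiv_right (m := 1) (by norm_num)).differentiable (by norm_num)

theorem deriv_deriv_comp_line (hu : ContDiff ℝ 2 u) (x v : E) :
    deriv (deriv fun t : ℝ => u (x + t • v)) 0 = fderiv ℝ (fderiv ℝ u) x v v := by
  have hline (t : ℝ) : HasDerivAt (fun s : ℝ => x + s • v) v t := by
    simpa using ((hasDerivAt_id t).smul_const v).const_add x
  have hderiv : deriv (fun t : ℝ => u (x + t • v)) = fun t => fderiv ℝ u (x + t • v) v :=
    funext fun t => ((hu.differentiable (by norm_num) _).hasFDerivAt.comp_hasDerivAt t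
      (hline t)).deriv
  have h := ((hu.differentiable_fderiv_of_two x).hasFDerivAt.clm_apply
    (hasFDerivAt_const v x)).comp_hasDerivAt_of_eq 0 (hline 0) (by simp)
  rw [hderiv]
  simpa [Function.comp_def] using h.deriv

theorem IsLocalMax.fderiv_fderiv_apply_self_nonpos {x₀ : E} (h : IsLocalMax u x₀)
    (hu : ContDiff ℝ 2 u) (v : E) : fderiv ℝ (fderiv ℝ u) x₀ v v ≤ 0 := by
  rw [← deriv_deriv_comp_line hu]
  refine IsLocalMax.deriv_deriv_nonpos ?_ (hu.continuous.comp (by fun_prop)).continuousAt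
  exact IsLocalMax.comp_continuous (by simpa using h) (by fun_prop)

theorem IsLocalMin.fderiv_fderiv_apply_self_nonneg {x₀ : E} (h : IsLocalMin u x₀)
    (hu : ContDiff ℝ 2 u) (v : E) : 0 ≤ fderiv ℝ (fderiv ℝ u) x₀ v v := by
  rw [← deriv_deriv_comp_line hu]
  refine IsLocalMin.deriv_deriv_nonneg ?_ (hu.continuous.comp (by fun_prop)).continuousAt
  exact IsLocalMin.comp_continuous (by simpa using h) (by fun_prop)

end SecondDerivative

namespace Matrix.IsHermitian

variable {n : Type*} [Fintype n] [DecidableEq n] {A : Matrix n n ℝ}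

theorem eigenvalues_sub_eq_dotProduct (hA : A.IsHermitian) (c : ℝ) (i : n) :
    hA.eigenvalues i - c =
      ⇑(hA.eigenvectorBasis i) ⬝ᵥ (A - c • 1) *ᵥ ⇑(hA.eigenvectorBasis i) := by
  have hunit : ⇑(hA.eigenvectorBasis i) ⬝ᵥ ⇑(hA.eigenvectorBasis i) = 1 := by
    have := hA.eigenvectorBasis.inner_eq_one i
    rwa [EuclideanSpace.inner_eq_star_dotProduct, star_trivial] at this
  rw [hA.eigenvalues_eq, sub_mulVec, dotProduct_sub, smul_mulVec, one_mulVec, dotProduct_smul,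
    hunit]
  simp

theorem le_eigenvalues (hA : A.IsHermitian) {c : ℝ} (h : (A - c • 1).PosSemidef) (i : n) :
    c ≤ hA.eigenvalues i := by
  have := h.dotProduct_mulVec_nonneg (hA.eigenvectorBasis i)
  rw [star_trivial, ← hA.eigenvalues_sub_eq_dotProduct] at this
  linarith

theorem eigenvalues_le (hA : A.IsHermitian) {c : ℝ} (h : (c • 1 - A).PosSemidef) (i : n) :
    hA.eigenvalues i ≤ c := by
  have := h.dotProduct_mulVec_nonneg (hA.eigenvectorBasis i)
  rw [star_trivial, ← neg_sub, neg_mulVec, dotProduct_neg,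
    ← hA.eigenvalues_sub_eq_dotProduct] at this
  linarith

theorem one_le_det (hA : A.IsHermitian) (h : (A - 1).PosSemidef) : 1 ≤ A.det := by
  rw [hA.det_eq_prod_eigenvalues]
  exact Finset.one_le_prod fun i _ => hA.le_eigenvalues (by simpa using h) i

end Matrix.IsHermitian

theorem Matrix.PosDef.det_le_one {n : Type*} [Fintype n] [DecidableEq n] {A : Matrix n n ℝ}
    (hA : A.PosDef) (h : (1 - A).PosSemidef) : A.det ≤ 1 := by
  rw [hA.isHermitian.det_eq_prod_eigenvalues]
  exact Finset.prod_le_one (fun i _ => (hA.eigenvalues_pos i).le)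
    fun i _ => hA.isHermitian.eigenvalues_le (by simpa using h) i

section PosDefFamily

variable {X n : Type*} [TopologicalSpace X] [Fintype n] {M : X → Matrix n n ℝ}

theorem isOpen_setOf_posDef (hM : Continuous M) (hherm : ∀ x, (M x).IsHermitian) :
    IsOpen {x | (M x).PosDef} := by
  refine isOpen_iff_eventually.2 fun x₀ h₀ => ?_
  have hq : Continuous fun z : X × (n → ℝ) => z.2 ⬝ᵥ M z.1 *ᵥ z.2 := by fun_prop
  have hsphere : ∀ᶠ x in 𝓝 x₀, ∀ w ∈ Metric.sphere (0 : n → ℝ) 1, 0 < w ⬝ᵥ M x *ᵥ w := by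
    refine (isCompact_sphere 0 1).eventually_forall_of_forall_eventually fun w hw => ?_
    have hw0 : w ≠ 0 := ne_zero_of_mem_sphere one_ne_zero ⟨w, hw⟩
    exact continuousAt_const.eventually_lt hq.continuousAt
      (by simpa using h₀.dotProduct_mulVec_pos hw0)
  filter_upwards [hsphere] with x hx
  refine .of_dotProduct_mulVec_pos (hherm x) fun v hv => ?_
  have hv' : 0 < ‖v‖ := norm_pos_iff.2 hv
  have := hx (‖v‖⁻¹ • v) (by simp [norm_smul, hv'.ne'])
  rw [star_trivial]
  simp only [mulVec_smul, dotProduct_smul, smul_dotProduct, smul_eq_mul] at this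
  exact pos_of_mul_pos_right (pos_of_mul_pos_right this (by positivity)) (by positivity)

variable [DecidableEq n]

theorem isClosed_setOf_posDef (hM : Continuous M) (hherm : ∀ x, (M x).IsHermitian)
    (hdet : ∀ x, (M x).det ≠ 0) : IsClosed {x | (M x).PosDef} := by
  have hset : {x | (M x).PosDef} = ⋂ v : n → ℝ, {x | 0 ≤ v ⬝ᵥ M x *ᵥ v} := by
    ext x
    simp only [Set.mem_ofPred_eq, Set.mem_iInter]
    refine ⟨fun h v => by simpa using h.posSemidef.dotProduct_mulVec_nonneg v, fun h => ?_⟩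
    exact (PosSemidef.of_dotProduct_mulVec_nonneg (hherm x) (by simpa using h)
      ).posDef_iff_det_ne_zero.2 (hdet x)
  rw [hset]
  exact isClosed_iInter fun v => isClosed_le continuous_const (by fun_prop)

theorem posDef_of_det_ne_zero [PreconnectedSpace X] (hM : Continuous M)
    (hherm : ∀ x, (M x).IsHermitian) (hdet : ∀ x, (M x).det ≠ 0) {x₀ : X} (h₀ : (M x₀).PosDef)
    (x : X) : (M x).PosDef := by
  have hclopen : IsClopen {x | (M x).PosDef} :=
    ⟨isClosed_setOf_posDef hM hherm hdet, isOpen_setOf_posDef hM hherm⟩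
  exact Set.eq_univ_iff_forall.1 (hclopen.eq_univ ⟨x₀, h₀⟩) x

end PosDefFamily

section ZPeriodic

variable {N : ℕ} {g : (Fin N → ℝ) → ℝ}

theorem ZPeriodic.range_eq_image_Icc (hg : ZPeriodic g) : Set.range g = g '' Set.Icc 0 1 := by
  refine subset_antisymm ?_ (Set.image_subset_range g _)
  rintro _ ⟨x, rfl⟩
  refine ⟨fun i => Int.fract (x i),
    ⟨fun i => Int.fract_nonneg _, fun i => (Int.fract_lt_one _).le⟩, ?_⟩
  have : (fun i => Int.fract (x i)) = x + fun i => ((-⌊x i⌋ : ℤ) : ℝ) := by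
    ext i
    simp [Int.fract, sub_eq_add_neg]
  rw [this, hg]

theorem ZPeriodic.isCompact_range (hg : ZPeriodic g) (hc : Continuous g) :
    IsCompact (Set.range g) :=
  hg.range_eq_image_Icc ▸ isCompact_Icc.image hc

theorem ZPeriodic.comp (hg : ZPeriodic g) (φ : ℝ → ℝ) : ZPeriodic (φ ∘ g) :=
  fun x k => congrArg φ (hg x k)

end ZPeriodic

section Hessian

variable {N : ℕ} {u : (Fin N → ℝ) → ℝ} {x : Fin N → ℝ}

theorem hess_eq_fderiv_fderiv (hu : DifferentiableAt ℝ (fderiv ℝ u) x) (i j : Fin N) :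
    hess u x i j = fderiv ℝ (fderiv ℝ u) x (Pi.single i 1) (Pi.single j 1) := by
  rw [hess, (hu.hasFDerivAt.clm_apply (hasFDerivAt_const _ x)).fderiv]
  simp

theorem hess_eq_toMatrix₂' (hu : DifferentiableAt ℝ (fderiv ℝ u) x) :
    Matrix.of (hess u x) =
      LinearMap.toMatrix₂' ℝ (ContinuousLinearMap.toLinearMap₁₂ (fderiv ℝ (fderiv ℝ u) x)) := by
  ext i j
  simp [hess_eq_fderiv_fderiv hu]

theorem dotProduct_hess_mulVec (hu : DifferentiableAt ℝ (fderiv ℝ u) x) (v : Fin N → ℝ) :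
    v ⬝ᵥ Matrix.of (hess u x) *ᵥ v = fderiv ℝ (fderiv ℝ u) x v v := by
  rw [hess_eq_toMatrix₂' hu, ← Matrix.toLinearMap₂'_apply', Matrix.toLinearMap₂'_toMatrix']
  simp

theorem hess_comm (hu : ContDiff ℝ 2 u) (x : Fin N → ℝ) (i j : Fin N) :
    hess u x i j = hess u x j i := by
  rw [hess_eq_fderiv_fderiv (hu.differentiable_fderiv_of_two x),
    hess_eq_fderiv_fderiv (hu.differentiable_fderiv_of_two x)]
  exact hu.contDiffAt.isSymmSndFDerivAt (by simp) _ _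

theorem amat_eq_one_sub_hess (h : fderiv ℝ u x = 0) : amat u x = 1 - Matrix.of (hess u x) := by
  ext i j
  simp [amat, grad, h]

theorem gradSq_eq_zero (h : fderiv ℝ u x = 0) : gradSq u x = 0 := by
  simp [gradSq, grad, h]

end Hessian

section Amat

variable {N : ℕ} {u : (Fin N → ℝ) → ℝ}

theorem gradSq_nonneg (u : (Fin N → ℝ) → ℝ) (x : Fin N → ℝ) : 0 ≤ gradSq u x :=
  Finset.sum_nonneg fun _ _ => sq_nonneg _

theorem continuous_amat (hu : ContDiff ℝ 2 u) : Continuous (amat u) := by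
  have hgrad (i : Fin N) : Continuous fun x => grad u x i :=
    (hu.continuous_fderiv (by norm_num)).clm_apply continuous_const
  have hhess (i j : Fin N) : Continuous fun x => hess u x i j := by
    simp only [hess_eq_fderiv_fderiv (hu.differentiable_fderiv_of_two _)]
    exact ((hu.fderiv_right (m := 1) (by norm_num)).continuous_fderiv (by norm_num)).clm_apply
      continuous_const |>.clm_apply continuous_const
  refine continuous_matrix fun i j => ?_
  simp only [amat, Matrix.sub_apply, Matrix.add_apply, of_apply]
  exact (continuous_const.add ((hgrad i).mul (hgrad j))).sub (hhess i j)

theorem isHermitian_amat (hu : ContDiff ℝ 2 u) (x : Fin N → ℝ) : (amat u x).IsHermitian := by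
  refine Matrix.IsHermitian.ext fun i j => ?_
  simp [amat, Matrix.one_apply, eq_comm, hess_comm hu x i j, mul_comm]

theorem posSemidef_amat_sub_one (hu : ContDiff ℝ 2 u) {x₀ : Fin N → ℝ} (h : IsLocalMax u x₀) :
    (amat u x₀ - 1).PosSemidef := by
  refine .of_dotProduct_mulVec_nonneg ((isHermitian_amat hu x₀).sub isHermitian_one) fun v => ?_
  rw [amat_eq_one_sub_hess h.fderiv_eq_zero, sub_sub_cancel_left, star_trivial, neg_mulVec,
    dotProduct_neg, dotProduct_hess_mulVec (hu.differentiable_fderiv_of_two x₀), neg_nonneg]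
  exact h.fderiv_fderiv_apply_self_nonpos hu v

theorem posSemidef_one_sub_amat (hu : ContDiff ℝ 2 u) {x₁ : Fin N → ℝ} (h : IsLocalMin u x₁) :
    (1 - amat u x₁).PosSemidef := by
  refine .of_dotProduct_mulVec_nonneg (isHermitian_one.sub (isHermitian_amat hu x₁)) fun v => ?_
  rw [amat_eq_one_sub_hess h.fderiv_eq_zero, sub_sub_cancel, star_trivial,
    dotProduct_hess_mulVec (hu.differentiable_fderiv_of_two x₁)]
  exact h.fderiv_fderiv_apply_self_nonneg hu v

end Amat

theorem Real.le_log_of_one_le_exp_neg_mul {a b : ℝ} (hb : 0 < b) (h : 1 ≤ exp (-a) * b) :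
    a ≤ log b := by
  rwa [le_log_iff_exp_le hb, ← mul_one (exp a), ← le_inv_mul_iff₀ (exp_pos a), ← exp_neg]

theorem Real.log_le_of_exp_neg_mul_le_one {a b : ℝ} (hb : 0 < b) (h : exp (-a) * b ≤ 1) :
    log b ≤ a := by
  rwa [log_le_iff_le_exp hb, ← mul_one (exp a), ← inv_mul_le_iff₀ (exp_pos a), ← exp_neg]

section Equation

variable {N : ℕ} {u f : (Fin N → ℝ) → ℝ} {p lam : ℝ} {x : Fin N → ℝ}

theorem det_amat_eq_of_fderiv_eq_zero
    (heq : (amat u x).det = exp (-(lam * u x)) * f x * (1 + gradSq u x) ^ p)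
    (h : fderiv ℝ u x = 0) : (amat u x).det = exp (-(lam * u x)) * f x := by
  rw [heq, gradSq_eq_zero h, add_zero, one_rpow, mul_one]

theorem det_amat_pos (hf : 0 < f x)
    (heq : (amat u x).det = exp (-(lam * u x)) * f x * (1 + gradSq u x) ^ p) :
    0 < (amat u x).det := by
  have := rpow_pos_of_pos (by linarith [gradSq_nonneg u x] : 0 < 1 + gradSq u x) p
  rw [heq]
  positivity

theorem mul_le_log_of_isLocalMax (hu : ContDiff ℝ 2 u) (hf : 0 < f x)
    (heq : (amat u x).det = exp (-(lam * u x)) * f x * (1 + gradSq u x) ^ p)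
    (h : IsLocalMax u x) : lam * u x ≤ log (f x) :=
  le_log_of_one_le_exp_neg_mul hf <| det_amat_eq_of_fderiv_eq_zero heq h.fderiv_eq_zero ▸
    (isHermitian_amat hu x).one_le_det (posSemidef_amat_sub_one hu h)

theorem log_le_mul_of_isLocalMin (hu : ContDiff ℝ 2 u) (hf : 0 < f x)
    (heq : (amat u x).det = exp (-(lam * u x)) * f x * (1 + gradSq u x) ^ p)
    (hA : (amat u x).PosDef) (h : IsLocalMin u x) : log (f x) ≤ lam * u x :=
  log_le_of_exp_neg_mul_le_one hf <| det_amat_eq_of_fderiv_eq_zero heq h.fderiv_eq_zero ▸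
    hA.det_le_one (posSemidef_one_sub_amat hu h)

end Equation

theorem stmt5_general {N : ℕ} (p : ℝ) (lam : ℝ) (hlam : 0 < lam)
    (f : (Fin N → ℝ) → ℝ) (hfcont : Continuous f)
    (hfper : ∀ (x : Fin N → ℝ) (k : Fin N → ℤ), f (x + fun i => (k i : ℝ)) = f x)
    (hfpos : ∀ x, 0 < f x)
    (u : (Fin N → ℝ) → ℝ) (hu : ContDiff ℝ 2 u) (hper : ZPeriodic u)
    (heq : ∀ x, (amat u x).det =
      Real.exp (-(lam * u x)) * f x * (1 + gradSq u x) ^ p) :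
    ∀ x, |u x| ≤ lam⁻¹ * sSup (Set.range fun y => |Real.log (f y)|) := by
  intro x
  have hrange := hper.isCompact_range hu.continuous
  obtain ⟨_, ⟨x₀, rfl⟩, hx₀⟩ := hrange.exists_isGreatest (Set.range_nonempty u)
  obtain ⟨_, ⟨x₁, rfl⟩, hx₁⟩ := hrange.exists_isLeast (Set.range_nonempty u)
  have hmax : IsLocalMax u x₀ := .of_forall fun y => hx₀ ⟨y, rfl⟩
  have hmin : IsLocalMin u x₁ := .of_forall fun y => hx₁ ⟨y, rfl⟩
  have hposdef : (amat u x₁).PosDef :=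
    posDef_of_det_ne_zero (continuous_amat hu) (isHermitian_amat hu)
      (fun y => (det_amat_pos (hfpos y) (heq y)).ne')
      (by simpa using PosDef.one.add_posSemidef (posSemidef_amat_sub_one hu hmax)) x₁
  have hup := mul_le_log_of_isLocalMax hu (hfpos x₀) (heq x₀) hmax
  have hlow := log_le_mul_of_isLocalMin hu (hfpos x₁) (heq x₁) hposdef hmin
  have hbdd : BddAbove (Set.range fun y => |log (f y)|) :=
    ((ZPeriodic.comp hfper fun t => |log t|).isCompact_range
      (hfcont.log fun y => (hfpos y).ne').abs).bddAbove
  have hM₀ := le_csSup hbdd ⟨x₀, rfl⟩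
  have hM₁ := le_csSup hbdd ⟨x₁, rfl⟩
  have hux₀ := mul_le_mul_of_nonneg_left (hx₀ ⟨x, rfl⟩) hlam.le
  have hux₁ := mul_le_mul_of_nonneg_left (hx₁ ⟨x, rfl⟩) hlam.le
  rw [le_inv_mul_iff₀ hlam, ← abs_of_pos hlam, ← abs_mul, abs_le]
  constructor <;> linarith [le_abs_self (log (f x₀)), neg_abs_le (log (f x₁))]

/-- C⁰ a priori estimate: any periodic solution of
`det A[u] = e^{−λu} f (1 + ‖∇u‖²)^p` satisfies `‖u‖_∞ ≤ λ⁻¹ ‖log f‖_∞`. -/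
theorem stmt5 {N : ℕ} (hN : 1 ≤ N) (p : ℝ) (hp : 0 ≤ p) (lam : ℝ) (hlam : 0 < lam)
    (f : (Fin N → ℝ) → ℝ) (hfcont : Continuous f)
    (hfper : ∀ (x : Fin N → ℝ) (k : Fin N → ℤ), f (x + fun i => (k i : ℝ)) = f x)
    (hfpos : ∀ x, 0 < f x)
    (u : (Fin N → ℝ) → ℝ) (hu : ContDiff ℝ 2 u) (hper : ZPeriodic u)
    (heq : ∀ x, (amat u x).det =
      Real.exp (-(lam * u x)) * f x * (1 + gradSq u x) ^ p) :
    ∀ x, |u x| ≤ lam⁻¹ * sSup (Set.range fun y => |Real.log (f y)|) :=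
  stmt5_general p lam hlam f hfcont hfper hfpos u hu hper heq
end
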